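/- On ℂ[x], with Δ, ∇, x̂, H = −x̂∘∇ as in the discrete setting, let R ∈ ℂ[X] be a fixed polynomial of degree d, G = R(H)∘Δ, and q ∈ ℂ[X] with q(0) = 0 and deg q = l ≥ 1; set P_n^q = e^{q(G)}((x)_n) where (x)_n is the falling factorial. Then the polynomials P_n^q are eigenfunctions of the difference operator L = q'(G)∘G − x̂∘∇ (where q' is the formal derivative of q), namely L(P_n^q) = n·P_n^q for every n ∈ ℕ. -/
import Mathlib


open Polynomial Finset

noncomputable section

/-- `E` is the ℂ-algebra of ℂ-linear endomorphisms of `ℂ[x]`. -/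
abbrev E := Module.End ℂ (Polynomial ℂ)

/-- `D`: the shift `p(x) ↦ p(x+1)`. -/
def Dop : E := (aeval (X + 1 : Polynomial ℂ)).toLinearMap

/-- `D⁻¹`: the shift `p(x) ↦ p(x−1)`. -/
def Dinv : E := (aeval (X - 1 : Polynomial ℂ)).toLinearMap

/-- `Δ = D − 1`. -/
def Del : E := Dop - 1

/-- `∇ = D⁻¹ − 1`. -/
def Nab : E := Dinv - 1

/-- `x̂`: multiplication by `x`. -/
def Xop : E := LinearMap.mulLeft ℂ (X : Polynomial ℂ)

/-- `H = −x̂∘∇`. -/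
def Hd : E := -(Xop * Nab)

/-- `G = R(H)∘Δ`. -/
def Gd (R : Polynomial ℂ) : E := aeval Hd R * Del


lemma aeval_poly (a p : Polynomial ℂ) : aeval a p = p.comp a :=
  (comp_eq_aeval).symm

lemma Hd_apply (p : Polynomial ℂ) : Hd p = X * p - X * p.comp (X - 1) := by
  simp [Hd, Nab, Dinv, Xop, aeval_poly, mul_sub]

lemma Del_apply (p : Polynomial ℂ) : Del p = p.comp (X + 1) - p := by
  simp [Del, Dop, aeval_poly]

lemma comm_HDel : Hd * Del = Del * Hd - Del := by
  refine LinearMap.ext fun p => ?_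
  simp only [Module.End.mul_apply, LinearMap.sub_apply, Hd_apply, Del_apply, sub_comp,
    mul_comp, X_comp, add_comp, one_comp, comp_assoc]
  have h1 : (X : Polynomial ℂ) - 1 + 1 = X := by ring
  have h2 : (X : Polynomial ℂ) + 1 - 1 = X := by ring
  simp only [h1, h2, comp_X]
  ring


lemma commute_Hd_aeval (R : Polynomial ℂ) : Commute Hd (aeval Hd R) := by
  simpa using ((Commute.all (X : Polynomial ℂ) R).map (aeval Hd))

lemma comm_HG (R : Polynomial ℂ) : Hd * Gd R = Gd R * Hd - Gd R := by
  rw [Gd, ← mul_assoc, (commute_Hd_aeval R).eq, mul_assoc, comm_HDel, mul_sub, ← mul_assoc]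

lemma comm_HGpow (R : Polynomial ℂ) (m : ℕ) :
    Hd * (Gd R) ^ m = (Gd R) ^ m * Hd - (m : ℂ) • (Gd R) ^ m := by
  induction m with
  | zero => simp
  | succ m ih =>
    have : Hd * (Gd R) ^ (m + 1) = (Hd * (Gd R) ^ m) * Gd R := by
      rw [pow_succ, ← mul_assoc]
    rw [this, ih, sub_mul, mul_assoc, comm_HG, smul_mul_assoc, ← pow_succ, mul_sub,
      ← mul_assoc, ← pow_succ]
    push_cast
    rw [add_smul, one_smul]
    abel

lemma comm_HA (R q : Polynomial ℂ) :
    Hd * aeval (Gd R) q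
      = aeval (Gd R) q * Hd - aeval (Gd R) (derivative q) * Gd R := by
  induction q using Polynomial.induction_on' with
  | add p r hp hr =>
    simp only [map_add, add_mul, mul_add, hp, hr]
    abel
  | monomial k a =>
    match k with
    | 0 =>
      simp only [derivative_monomial, Nat.cast_zero, mul_zero, map_zero, zero_mul, sub_zero]
      simp only [aeval_monomial, pow_zero, mul_one]
      exact (Algebra.commutes a Hd).symm
    | k + 1 =>
      simp only [derivative_monomial, aeval_monomial, Nat.add_sub_cancel]
      rw [← mul_assoc Hd, ← Algebra.commutes a Hd, mul_assoc, comm_HGpow, mul_sub,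
        ← mul_assoc, map_mul, mul_assoc _ ((Gd R) ^ k) (Gd R), ← pow_succ]
      rw [mul_smul_comm]
      congr 1
      rw [Algebra.smul_def, ← mul_assoc, map_natCast]
      push_cast
      congr 1
      exact (Algebra.commutes a ((k : E) + 1)).symm

lemma commute_AB (R q : Polynomial ℂ) :
    Commute (aeval (Gd R) q) (aeval (Gd R) (derivative q) * Gd R) := by
  have := (Commute.all q (derivative q * X)).map (aeval (Gd R))
  simpa [map_mul] using this

lemma comm_HApow (R q : Polynomial ℂ) (j : ℕ) :
    Hd * (aeval (Gd R) q) ^ (j + 1)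
      = (aeval (Gd R) q) ^ (j + 1) * Hd
        - ((j + 1 : ℕ) : ℂ) • ((aeval (Gd R) q) ^ j * (aeval (Gd R) (derivative q) * Gd R)) := by
  set A := aeval (Gd R) q with hA
  set B := aeval (Gd R) (derivative q) * Gd R with hB
  induction j with
  | zero => simpa using comm_HA R q
  | succ j ih =>
    have h1 : Hd * A ^ (j + 2) = (Hd * A ^ (j + 1)) * A := by rw [pow_succ, ← mul_assoc]
    have hcomm : B * A = A * B := by rw [hA, hB]; exact (commute_AB R q).symm.eq
    rw [h1, ih, sub_mul, mul_assoc, comm_HA R q, ← hA, ← hB, mul_sub, ← mul_assoc, ← pow_succ,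
      smul_mul_assoc, mul_assoc (A ^ j) B A, hcomm,
      ← mul_assoc (A ^ j) A B, ← pow_succ]
    push_cast
    module

lemma comp_shift_ne_zero {p : Polynomial ℂ} (c : ℂ) (hp : p ≠ 0) : p.comp (X + C c) ≠ 0 := by
  intro h
  apply hp
  have h2 := congrArg (fun r => r.comp (X + C (-c))) h
  simpa [comp_assoc, add_comp] using h2

lemma degree_comp_shift (p : Polynomial ℂ) (c : ℂ) : (p.comp (X + C c)).degree = p.degree := by
  by_cases hp : p = 0
  · simp [hp]
  · rw [degree_eq_natDegree (comp_shift_ne_zero c hp), degree_eq_natDegree hp,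
      natDegree_comp, natDegree_X_add_C, mul_one]

lemma leadingCoeff_comp_shift (p : Polynomial ℂ) (c : ℂ) :
    (p.comp (X + C c)).leadingCoeff = p.leadingCoeff := by
  rw [leadingCoeff_comp (by rw [natDegree_X_add_C]; exact one_ne_zero)]
  simp [(monic_X_add_C c).leadingCoeff]

lemma degree_shift_sub_lt {p : Polynomial ℂ} (c : ℂ) (hp : p ≠ 0) :
    (p.comp (X + C c) - p).degree < p.degree := by
  have := degree_sub_lt (degree_comp_shift p c) (comp_shift_ne_zero c hp)
    (leadingCoeff_comp_shift p c)
  rwa [degree_comp_shift p c] at this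

lemma Del_mem {k : ℕ} {p : Polynomial ℂ} (h : p ∈ degreeLT ℂ (k + 1)) :
    Del p ∈ degreeLT ℂ k := by
  rw [mem_degreeLT] at h ⊢
  by_cases hp : p = 0
  · simp only [hp, map_zero, degree_zero]
    exact (by simp : ((k:ℕ) : WithBot ℕ) ≠ ⊥).bot_lt
  · have h1 : Del p = p.comp (X + C 1) - p := by simp [Del_apply]
    have h2 := degree_shift_sub_lt (1:ℂ) hp
    rw [← h1] at h2
    have h3 : p.degree ≤ (k : WithBot ℕ) := by
      rw [degree_eq_natDegree hp] at h ⊢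
      exact_mod_cast Nat.lt_succ_iff.mp (by exact_mod_cast h)
    exact lt_of_lt_of_le h2 h3

lemma Hd_mem {k : ℕ} {p : Polynomial ℂ} (h : p ∈ degreeLT ℂ k) :
    Hd p ∈ degreeLT ℂ k := by
  have h1 : Hd p = -(X * (p.comp (X + C (-1:ℂ)) - p)) := by
    rw [Hd_apply]
    have : (X : Polynomial ℂ) + C (-1) = X - 1 := by simp [sub_eq_add_neg]
    rw [this]; ring
  rw [mem_degreeLT] at h ⊢
  set s := p.comp (X + C (-1:ℂ)) - p with hs
  by_cases h0 : s = 0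
  · rw [h1, h0, mul_zero, neg_zero, degree_zero]
    exact (by simp : ((k:ℕ) : WithBot ℕ) ≠ ⊥).bot_lt
  · have hp : p ≠ 0 := by rintro rfl; exact h0 (by simp [hs])
    have h2 : s.degree < p.degree := degree_shift_sub_lt (-1:ℂ) hp
    rw [h1, degree_neg, degree_mul, degree_X, degree_eq_natDegree h0,
      degree_eq_natDegree hp] at *
    have h4 : s.natDegree < p.natDegree := by exact_mod_cast h2
    have h5 : p.natDegree < k := by exact_mod_cast h
    have : (1 : WithBot ℕ) + (s.natDegree : WithBot ℕ) = ((1 + s.natDegree : ℕ) : WithBot ℕ) := by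
      push_cast; rfl
    rw [this]
    exact_mod_cast (by omega : 1 + s.natDegree < k)

lemma aeval_mem {k : ℕ} (T : E) (hT : ∀ p ∈ degreeLT ℂ k, T p ∈ degreeLT ℂ k)
    (S : Polynomial ℂ) {p : Polynomial ℂ} (h : p ∈ degreeLT ℂ k) :
    aeval T S p ∈ degreeLT ℂ k := by
  have hpow : ∀ m, (T ^ m) p ∈ degreeLT ℂ k := by
    intro m
    induction m with
    | zero => simpa using h
    | succ m ih =>
      rw [pow_succ', Module.End.mul_apply]
      exact hT _ ih
  rw [aeval_eq_sum_range, LinearMap.sum_apply]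
  apply Submodule.sum_mem
  intro i _
  rw [LinearMap.smul_apply]
  exact Submodule.smul_mem _ _ (hpow i)

lemma G_mem {k : ℕ} (R : Polynomial ℂ) {p : Polynomial ℂ} (h : p ∈ degreeLT ℂ (k + 1)) :
    Gd R p ∈ degreeLT ℂ k := by
  rw [Gd, Module.End.mul_apply]
  exact aeval_mem Hd (fun _ hp => Hd_mem hp) R (Del_mem h)

lemma degreeLT_zero_eq {p : Polynomial ℂ} (h : p ∈ degreeLT ℂ 0) : p = 0 := by
  rw [mem_degreeLT] at h
  rw [← degree_eq_bot]
  exact Nat.WithBot.lt_zero_iff.mp (by exact_mod_cast h)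

lemma G_mem' {k : ℕ} (R : Polynomial ℂ) {p : Polynomial ℂ} (h : p ∈ degreeLT ℂ k) :
    Gd R p ∈ degreeLT ℂ k := by
  match k with
  | 0 => rw [degreeLT_zero_eq h, map_zero]; exact Submodule.zero_mem _
  | k + 1 =>
    have := G_mem R h
    rw [mem_degreeLT] at this ⊢
    exact this.trans (by exact_mod_cast Nat.lt_succ_self k)

lemma A_mem {k : ℕ} (R : Polynomial ℂ) {q : Polynomial ℂ} (hq0 : q.eval 0 = 0)
    {p : Polynomial ℂ} (h : p ∈ degreeLT ℂ (k + 1)) :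
    aeval (Gd R) q p ∈ degreeLT ℂ k := by
  have hq : q = X * q.divX := by
    conv_lhs => rw [← X_mul_divX_add q]
    rw [← coeff_zero_eq_eval_zero] at hq0
    rw [hq0, map_zero, add_zero]
  rw [hq, map_mul, aeval_X, Module.End.mul_apply]
  exact G_mem R (aeval_mem (Gd R) (fun _ hp => G_mem' R hp) q.divX h)

lemma B_mem {k : ℕ} (R q : Polynomial ℂ) {p : Polynomial ℂ} (h : p ∈ degreeLT ℂ (k + 1)) :
    (aeval (Gd R) (derivative q) * Gd R) p ∈ degreeLT ℂ k := by
  rw [Module.End.mul_apply]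
  exact aeval_mem (Gd R) (fun _ hp => G_mem' R hp) (derivative q) (G_mem R h)

lemma Apow_zero (R : Polynomial ℂ) {q : Polynomial ℂ} (hq0 : q.eval 0 = 0) :
    ∀ (k : ℕ) (p : Polynomial ℂ), p ∈ degreeLT ℂ k → ((aeval (Gd R) q) ^ k) p = 0 := by
  intro k
  induction k with
  | zero => intro p hp; simpa using degreeLT_zero_eq hp
  | succ k ih =>
    intro p hp
    rw [pow_succ, Module.End.mul_apply]
    exact ih _ (A_mem R hq0 hp)

lemma Hd_desc (n : ℕ) : Hd (descPochhammer ℂ n) = (n : ℂ) • descPochhammer ℂ n := by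
  rw [Hd_apply, ← descPochhammer_succ_left, descPochhammer_succ_right, smul_eq_C_mul,
    C_eq_natCast]
  ring


/-- `P_n^q = e^{q(G)}((x)_n)`, the exponential series being a finite sum
(all terms with `j > n` vanish). -/
def Pqd (R q : Polynomial ℂ) (n : ℕ) : Polynomial ℂ :=
  ∑ j ∈ range (n + 1), (j.factorial : ℂ)⁻¹ • ((aeval (Gd R) q) ^ j) (descPochhammer ℂ n)

/-- The polynomials `P_n^q` are eigenfunctions of the difference operator
`L = q'(G)∘G − x̂∘∇` with eigenvalue `n`. -/
theorem Pqd_eigenfunction (R : Polynomial ℂ) (d : ℕ) (hR : R.natDegree = d)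
    (q : Polynomial ℂ) (hq0 : q.eval 0 = 0) (l : ℕ) (hl : 1 ≤ l)
    (hql : q.natDegree = l) (n : ℕ) :
    (aeval (Gd R) (derivative q) * Gd R - Xop * Nab) (Pqd R q n)
      = (n : ℂ) • Pqd R q n := by
  have hpnmem : descPochhammer ℂ n ∈ degreeLT ℂ (n + 1) := by
    rw [mem_degreeLT, degree_eq_natDegree (monic_descPochhammer ℂ n).ne_zero,
      descPochhammer_natDegree]
    exact_mod_cast Nat.lt_succ_self n
  set pn := descPochhammer ℂ n with hpn
  set A := aeval (Gd R) q with hA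
  set B := aeval (Gd R) (derivative q) * Gd R with hB
  set r := B pn with hr
  set c : ℕ → ℂ := fun j => (j.factorial : ℂ)⁻¹ with hc
  have hrmem : r ∈ degreeLT ℂ n := B_mem R q hpnmem
  have hAnr : (A ^ n) r = 0 := Apow_zero R hq0 n r hrmem
  have hcomm : ∀ j : ℕ, B ((A ^ j) pn) = (A ^ j) r := by
    intro j
    have h1 : B * A ^ j = A ^ j * B := ((commute_AB R q).symm.pow_right j).eq
    calc B ((A ^ j) pn) = (B * A ^ j) pn := rfl
      _ = (A ^ j * B) pn := by rw [h1]
      _ = (A ^ j) r := rfl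
  have hHd0 : Hd pn = (n : ℂ) • pn := Hd_desc n
  have hHds : ∀ i : ℕ, Hd ((A ^ (i + 1)) pn)
      = (n : ℂ) • (A ^ (i + 1)) pn - ((i + 1 : ℕ) : ℂ) • (A ^ i) r := by
    intro i
    have h1 := DFunLike.congr_fun (comm_HApow R q i) pn
    rw [← hA, ← hB] at h1
    simp only [Module.End.mul_apply, LinearMap.sub_apply, LinearMap.smul_apply] at h1
    rw [h1, hHd0, map_smul, ← hr]
  have hfac : ∀ i : ℕ, c (i + 1) * ((i + 1 : ℕ) : ℂ) = c i := by
    intro i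
    have h1 : (i.factorial : ℂ) ≠ 0 := Nat.cast_ne_zero.mpr i.factorial_ne_zero
    have h2 : ((i + 1 : ℕ) : ℂ) ≠ 0 := Nat.cast_ne_zero.mpr (Nat.succ_ne_zero i)
    rw [hc]
    simp only [Nat.factorial_succ]
    push_cast
    field_simp
  have hXN : Xop * Nab = -Hd := by rw [Hd, neg_neg]
  rw [hXN, sub_neg_eq_add, LinearMap.add_apply]
  have hP : Pqd R q n = ∑ j ∈ range (n + 1), c j • (A ^ j) pn := rfl
  rw [hP]
  have hBP : B (∑ j ∈ range (n + 1), c j • (A ^ j) pn)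
      = ∑ j ∈ range (n + 1), c j • (A ^ j) r := by
    rw [map_sum]
    exact Finset.sum_congr rfl fun j _ => by rw [map_smul, hcomm j]
  have hHP : Hd (∑ j ∈ range (n + 1), c j • (A ^ j) pn)
      = (n : ℂ) • (∑ j ∈ range (n + 1), c j • (A ^ j) pn)
        - ∑ i ∈ range n, c i • (A ^ i) r := by
    rw [map_sum]
    have hterm : ∀ j, Hd (c j • (A ^ j) pn) = c j • Hd ((A ^ j) pn) := fun j => map_smul Hd _ _
    simp only [hterm]
    rw [Finset.sum_range_succ' (fun j => c j • Hd ((A ^ j) pn))]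
    have h0 : c 0 • Hd ((A ^ 0) pn) = (n : ℂ) • (c 0 • (A ^ 0) pn) := by
      simp only [pow_zero, Module.End.one_apply, hHd0]
      rw [smul_comm]
    have hsucc : ∀ i, c (i + 1) • Hd ((A ^ (i + 1)) pn)
        = (n : ℂ) • (c (i + 1) • (A ^ (i + 1)) pn) - c i • (A ^ i) r := by
      intro i
      rw [hHds i, smul_sub, smul_smul, smul_smul, hfac i,
        mul_comm (c (i + 1)) ((n : ℕ) : ℂ), ← smul_smul]
    simp only [hsucc]
    rw [Finset.sum_sub_distrib, h0, ← Finset.smul_sum]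
    rw [Finset.sum_range_succ' (fun j => c j • (A ^ j) pn), smul_add]
    abel
  rw [hBP, hHP, Finset.sum_range_succ, hAnr, smul_zero, add_zero]
  abel

end
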